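/- arXiv:2407.18641 — 3 statements merged into one kernel-verified Lean document; each statement's English description precedes it below -/
import Mathlib

section
/- Let T>0, n ≥ 1, A ∈ ℝ^{n×n} and b ∈ ℝ^n be such that the pair (A,b) satisfies the Kalman rank condition rank[b, Ab, …, A^{n−1}b] = n, and let E ∈ ℝ^n be a nonzero output vector. Then there exists k* ∈ {1,…,n} such that for every function f : ℝ → ℝ of class C^{n−k*+1} with f^{(i)}(0) = 0 for all i = 0,1,…,n−k*, there exists a continuous (in particular square-integrable) control u : [0,T] → ℝ such that the state x(t) = ∫_0^t e^{A(t−s)} b u(s) ds satisfies ⟨E, x(t)⟩_{ℝ^n} = f(t) for every t ∈ [0,T]. -/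
open MeasureTheory Matrix

/-!
Let `m` be the relative degree of the output `y = E ⬝ᵥ x`, i.e. the least `m` with
`E ⬝ᵥ (A ^ m *ᵥ b) ≠ 0`; the Kalman condition forces `m < n`, and `k* = n - m`. For a state of
`x' = A x + u b`, the outputs `y_i = (E ᵥ* A ^ i) ⬝ᵥ x` satisfy `y_i' = y_{i+1}` for `i < m`, while
`y_m' = (E ᵥ* A ^ (m+1)) ⬝ᵥ x + u (E ⬝ᵥ A ^ m *ᵥ b)`. The feedback
`u = (f^(m+1) - (E ᵥ* A ^ (m+1)) ⬝ᵥ x) / (E ⬝ᵥ A ^ m *ᵥ b)` closes the loop into a linear ODE, whose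
Duhamel solution makes `y_m' = f^(m+1)`. Since all `y_i` and `f^(i)`, `i ≤ m`, vanish at `0`,
integrating `m + 1` times gives `y_0 = f`.
-/

namespace ControlTheory

section Calculus

variable {ι κ : Type*} [Fintype ι] [Fintype κ]

theorem hasDerivAt_dotProduct (c : ι → ℝ) {x : ℝ → ι → ℝ} {x' : ι → ℝ} {t : ℝ}
    (hx : HasDerivAt x x' t) : HasDerivAt (fun t => c ⬝ᵥ x t) (c ⬝ᵥ x') t :=
  (LinearMap.toContinuousLinearMap (dotProductBilin ℝ ℝ c)).hasFDerivAt.comp_hasDerivAt t hx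

attribute [local instance] Matrix.linftyOpNormedAddCommGroup Matrix.linftyOpNormedSpace

theorem hasDerivAt_matrix_mulVec {M : ℝ → Matrix κ ι ℝ} {M' : Matrix κ ι ℝ}
    {v : ℝ → ι → ℝ} {v' : ι → ℝ} {t : ℝ} (hM : HasDerivAt M M' t) (hv : HasDerivAt v v' t) :
    HasDerivAt (fun t => M t *ᵥ v t) (M' *ᵥ v t + M t *ᵥ v') t := by
  classical
  let B : Matrix κ ι ℝ →L[ℝ] (ι → ℝ) →L[ℝ] (κ → ℝ) := LinearMap.toContinuousLinearMap
    (LinearMap.toContinuousLinearMap.toLinearMap ∘ₗ Matrix.toLin'.toLinearMap)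
  exact (B.hasFDerivAt.comp_hasDerivAt t hM).clm_apply hv

end Calculus

variable {ι : Type*} [Fintype ι] [DecidableEq ι]

theorem exp_smul_mul_exp_smul (A : Matrix ι ι ℝ) (s t : ℝ) :
    NormedSpace.exp (s • A) * NormedSpace.exp (t • A) = NormedSpace.exp ((s + t) • A) := by
  rw [← Matrix.exp_add_of_commute _ _ (((Commute.refl A).smul_left s).smul_right t), add_smul]

theorem continuous_exp_smul (A : Matrix ι ι ℝ) :
    Continuous fun t : ℝ => NormedSpace.exp (t • A) := by
  -- `Matrix` has no global norm; any norm inducing its topology would do here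
  let := Matrix.linftyOpNormedRing (n := ι) (α := ℝ)
  let := Matrix.linftyOpNormedAlgebra (n := ι) (R := ℝ) (α := ℝ)
  exact continuous_iff_continuousAt.2 fun t => (hasDerivAt_exp_smul_const' A t).continuousAt

theorem hasDerivAt_exp_smul_mulVec (A : Matrix ι ι ℝ) {y : ℝ → ι → ℝ} {y' : ι → ℝ} {t : ℝ}
    (hy : HasDerivAt y y' t) :
    HasDerivAt (fun t => NormedSpace.exp (t • A) *ᵥ y t)
      (A *ᵥ (NormedSpace.exp (t • A) *ᵥ y t) + NormedSpace.exp (t • A) *ᵥ y') t := by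
  rw [Matrix.mulVec_mulVec]
  let := Matrix.linftyOpNormedRing (n := ι) (α := ℝ)
  let := Matrix.linftyOpNormedAlgebra (n := ι) (R := ℝ) (α := ℝ)
  exact hasDerivAt_matrix_mulVec (hasDerivAt_exp_smul_const' A t) hy

noncomputable def duhamel (A : Matrix ι ι ℝ) (v : ℝ → ι → ℝ) (t : ℝ) : ι → ℝ :=
  ∫ s in (0 : ℝ)..t, NormedSpace.exp ((t - s) • A) *ᵥ v s

@[simp]
theorem duhamel_zero (A : Matrix ι ι ℝ) (v : ℝ → ι → ℝ) : duhamel A v 0 = 0 := by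
  simp [duhamel]

theorem duhamel_eq_exp_mulVec (A : Matrix ι ι ℝ) {v : ℝ → ι → ℝ} (hv : Continuous v) (t : ℝ) :
    duhamel A v t =
      NormedSpace.exp (t • A) *ᵥ ∫ s in (0 : ℝ)..t, NormedSpace.exp ((-s) • A) *ᵥ v s := by
  let L : (ι → ℝ) →L[ℝ] (ι → ℝ) :=
    LinearMap.toContinuousLinearMap (Matrix.toLin' (NormedSpace.exp (t • A)))
  have hint : Continuous fun s : ℝ => NormedSpace.exp ((-s) • A) *ᵥ v s :=
    ((continuous_exp_smul A).comp continuous_neg).matrix_mulVec hv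
  change _ = L _
  rw [← L.intervalIntegral_comp_comm (hint.intervalIntegrable _ _)]
  refine intervalIntegral.integral_congr fun s _ => ?_
  simp only [L, LinearMap.coe_toContinuousLinearMap', Matrix.toLin'_apply, Matrix.mulVec_mulVec,
    exp_smul_mul_exp_smul, sub_eq_add_neg]

theorem hasDerivAt_duhamel (A : Matrix ι ι ℝ) {v : ℝ → ι → ℝ} (hv : Continuous v) (t : ℝ) :
    HasDerivAt (duhamel A v) (A *ᵥ duhamel A v t + v t) t := by
  have hint : Continuous fun s : ℝ => NormedSpace.exp ((-s) • A) *ᵥ v s :=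
    ((continuous_exp_smul A).comp continuous_neg).matrix_mulVec hv
  have hI := intervalIntegral.integral_hasDerivAt_right (hint.intervalIntegrable 0 t)
    hint.stronglyMeasurable.stronglyMeasurableAtFilter hint.continuousAt
  rw [funext (duhamel_eq_exp_mulVec A hv)]
  refine (hasDerivAt_exp_smul_mulVec A hI).congr_deriv ?_
  rw [Matrix.mulVec_mulVec (v t), exp_smul_mul_exp_smul, add_neg_cancel, zero_smul,
    NormedSpace.exp_zero, Matrix.one_mulVec]

theorem eq_duhamel_of_hasDerivAt (A : Matrix ι ι ℝ) {v x : ℝ → ι → ℝ} (hv : Continuous v)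
    (hx : ∀ t, HasDerivAt x (A *ᵥ x t + v t) t) (hx0 : x 0 = 0) : x = duhamel A v := by
  let L : (ι → ℝ) →L[ℝ] (ι → ℝ) := LinearMap.toContinuousLinearMap (Matrix.toLin' A)
  exact ODE_solution_unique_univ (v := fun t y => A *ᵥ y + v t) (s := fun _ => Set.univ)
    (fun t => (L.lipschitz.add (LipschitzWith.const (v t))).lipschitzOnWith)
    (fun t => ⟨hx t, trivial⟩) (fun t => ⟨hasDerivAt_duhamel A hv t, trivial⟩)
    (t₀ := 0) (by rw [hx0, duhamel_zero])

theorem exists_continuous_control_hasDerivAt_dotProduct_duhamel (A : Matrix ι ι ℝ) (b c : ι → ℝ)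
    (hcb : c ⬝ᵥ b ≠ 0) {g : ℝ → ℝ} (hg : Continuous g) :
    ∃ u : ℝ → ℝ, Continuous u ∧
      ∀ t, HasDerivAt (fun τ => c ⬝ᵥ duhamel A (fun s => u s • b) τ) (g t) t := by
  set γ := c ⬝ᵥ b
  -- closed loop of the feedback `u = γ⁻¹ (g - (c ᵥ* A) ⬝ᵥ x)`, which forces `(c ⬝ᵥ x)' = g`
  let C := A - γ⁻¹ • vecMulVec b (c ᵥ* A)
  let w : ℝ → ι → ℝ := fun s => (γ⁻¹ * g s) • b
  have hw : Continuous w := (continuous_const.mul hg).smul continuous_const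
  let x := duhamel C w
  have hxC : ∀ t, HasDerivAt x (C *ᵥ x t + w t) t := hasDerivAt_duhamel C hw
  let u : ℝ → ℝ := fun t => γ⁻¹ * (g t - (c ᵥ* A) ⬝ᵥ x t)
  have hu : Continuous u := continuous_const.mul <| hg.sub <| continuous_const.dotProduct <|
    continuous_iff_continuousAt.2 fun t => (hxC t).continuousAt
  have hx : ∀ t, HasDerivAt x (A *ᵥ x t + u t • b) t := fun t => (hxC t).congr_deriv <| by
    ext i
    simp only [C, w, u, sub_mulVec, smul_mulVec, vecMulVec_mulVec, op_smul_eq_smul, Pi.add_apply,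
      Pi.sub_apply, Pi.smul_apply, smul_eq_mul]
    ring
  have hub : Continuous fun s => u s • b := hu.smul continuous_const
  refine ⟨u, hu, fun t => ?_⟩
  rw [← eq_duhamel_of_hasDerivAt A hub hx (duhamel_zero C w)]
  refine (hasDerivAt_dotProduct c (hx t)).congr_deriv ?_
  rw [dotProduct_add, dotProduct_mulVec, dotProduct_smul, smul_eq_mul]
  simp only [u]
  field_simp
  ring

theorem eq_of_hasDerivAt_of_eq {F : Type*} [NormedAddCommGroup F] [NormedSpace ℝ F]
    {p q r : ℝ → F} (hp : ∀ t, HasDerivAt p (r t) t) (hq : ∀ t, HasDerivAt q (r t) t) (t₀ : ℝ)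
    (h₀ : p t₀ = q t₀) : p = q :=
  eq_of_fderiv_eq (fun t => (hp t).differentiableAt) (fun t => (hq t).differentiableAt)
    (fun t => by rw [(hp t).hasFDerivAt.fderiv, (hq t).hasFDerivAt.fderiv]) t₀ h₀

theorem eq_of_hasDerivAt_succ {F : Type*} [NormedAddCommGroup F] [NormedSpace ℝ F]
    {y z : ℕ → ℝ → F} (m : ℕ) (hy : ∀ i < m, ∀ t, HasDerivAt (y i) (y (i + 1) t) t)
    (hz : ∀ i < m, ∀ t, HasDerivAt (z i) (z (i + 1) t) t) (h₀ : ∀ i < m, y i 0 = z i 0)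
    (hm : y m = z m) : y 0 = z 0 := by
  induction m generalizing y z with
  | zero => exact hm
  | succ m ih =>
    have h₁ : y 1 = z 1 := ih (y := fun i => y (i + 1)) (z := fun i => z (i + 1))
      (fun i hi => hy (i + 1) (by omega)) (fun i hi => hz (i + 1) (by omega))
      (fun i hi => h₀ (i + 1) (by omega)) hm
    refine eq_of_hasDerivAt_of_eq (fun t => ?_) (hz 0 (by omega)) 0 (h₀ 0 (by omega))
    simpa only [h₁] using hy 0 (by omega) t

theorem exists_continuous_control_dotProduct_duhamel_eq (A : Matrix ι ι ℝ) (b E : ι → ℝ) (m : ℕ)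
    (hvanish : ∀ i < m, E ⬝ᵥ (A ^ i *ᵥ b) = 0) (hm : E ⬝ᵥ (A ^ m *ᵥ b) ≠ 0) {f : ℝ → ℝ}
    (hf : ContDiff ℝ (m + 1) f) (hf₀ : ∀ i ≤ m, iteratedDeriv i f 0 = 0) :
    ∃ u : ℝ → ℝ, Continuous u ∧ ∀ t, E ⬝ᵥ duhamel A (fun s => u s • b) t = f t := by
  obtain ⟨u, hu, hym⟩ := exists_continuous_control_hasDerivAt_dotProduct_duhamel A b (E ᵥ* A ^ m)
    (by rwa [← dotProduct_mulVec]) (hf.continuous_iteratedDeriv (m + 1) le_rfl)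
  set x := duhamel A (fun s => u s • b)
  have hx := hasDerivAt_duhamel A (v := fun s => u s • b) (hu.smul continuous_const)
  have hf' : ∀ i ≤ m, ∀ t, HasDerivAt (iteratedDeriv i f) (iteratedDeriv (i + 1) f t) t :=
    fun i hi t => by
      rw [iteratedDeriv_succ]
      have hdiff := hf.differentiable_iteratedDeriv i (by exact_mod_cast Nat.lt_succ_of_le hi)
      exact (hdiff t).hasDerivAt
  let y : ℕ → ℝ → ℝ := fun i t => (E ᵥ* A ^ i) ⬝ᵥ x t
  have hy : ∀ i < m, ∀ t, HasDerivAt (y i) (y (i + 1) t) t := fun i hi t =>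
    (hasDerivAt_dotProduct _ (hx t)).congr_deriv <| by
      rw [dotProduct_add, dotProduct_mulVec, vecMul_vecMul, ← pow_succ, dotProduct_smul,
        ← dotProduct_mulVec E (A ^ i) b, hvanish i hi, smul_zero, add_zero]
  have hy₀ : ∀ i, y i 0 = 0 := fun i => by simp [y, x]
  have hyf : y m = iteratedDeriv m f :=
    eq_of_hasDerivAt_of_eq hym (hf' m le_rfl) 0 (by rw [hy₀, hf₀ m le_rfl])
  have := eq_of_hasDerivAt_succ m hy (fun i hi => hf' i hi.le)
    (fun i hi => by rw [hy₀, hf₀ i hi.le]) hyf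
  refine ⟨u, hu, fun t => ?_⟩
  simpa [y] using congrFun this t

theorem exists_lt_dotProduct_pow_mulVec_ne_zero {K : Type*} [Field K] {n : ℕ}
    {A : Matrix (Fin n) (Fin n) K} {b : Fin n → K}
    (hKalman : (Matrix.of fun (i j : Fin n) => ((A ^ (j : ℕ)) *ᵥ b) i).rank = n)
    {E : Fin n → K} (hE : E ≠ 0) : ∃ j < n, E ⬝ᵥ (A ^ j *ᵥ b) ≠ 0 := by
  set M := Matrix.of fun (i j : Fin n) => ((A ^ (j : ℕ)) *ᵥ b) i
  have hM : IsUnit M := by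
    refine mulVec_surjective_iff_isUnit.mp ((LinearMap.range_eq_top (f := M.mulVecLin)).mp ?_)
    exact Submodule.eq_top_of_finrank_eq (by rw [Module.finrank_fin_fun]; exact hKalman)
  by_contra! h
  refine hE (vecMul_injective_iff_isUnit.mpr hM ?_)
  ext j
  simpa [vecMul, dotProduct, M, mulVec, mul_comm] using h j j.isLt

end ControlTheory

open ControlTheory

theorem scalar_tracking_controllability_general
    (T : ℝ) (n : ℕ)
    (A : Matrix (Fin n) (Fin n) ℝ) (b : Fin n → ℝ)
    (hKalman : (Matrix.of fun (i j : Fin n) => ((A ^ (j : ℕ)) *ᵥ b) i).rank = n)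
    (E : Fin n → ℝ) (hE : E ≠ 0) :
    ∃ kstar : ℕ, 1 ≤ kstar ∧ kstar ≤ n ∧
      ∀ f : ℝ → ℝ, ContDiff ℝ (n - kstar + 1) f →
        (∀ i : ℕ, i ≤ n - kstar → iteratedDeriv i f 0 = 0) →
        ∃ u : ℝ → ℝ, ContinuousOn u (Set.Icc 0 T) ∧
          ∀ t ∈ Set.Icc (0:ℝ) T,
            E ⬝ᵥ (∫ s in (0:ℝ)..t, NormedSpace.exp ((t - s) • A) *ᵥ (u s • b)) = f t := by
  obtain ⟨j, hjn, hj⟩ := exists_lt_dotProduct_pow_mulVec_ne_zero hKalman hE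
  have hex : ∃ j, E ⬝ᵥ (A ^ j *ᵥ b) ≠ 0 := ⟨j, hj⟩
  set m := Nat.find hex
  have hmn : m < n := (Nat.find_min' hex hj).trans_lt hjn
  refine ⟨n - m, by omega, by omega, fun f hf hf₀ => ?_⟩
  have hsmooth : ((n : WithTop ℕ∞) - ((n - m : ℕ) : WithTop ℕ∞)) = m := by
    rw [← WithTop.coe_natCast, ← WithTop.coe_natCast (n - m), ← WithTop.coe_sub,
      ← ENat.natCast_sub, Nat.sub_sub_self hmn.le]
    rfl
  obtain ⟨u, hu, hEu⟩ := exists_continuous_control_dotProduct_duhamel_eq A b E m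
    (fun i hi => not_not.mp (Nat.find_min hex hi)) (Nat.find_spec hex) (hsmooth ▸ hf)
    (fun i hi => hf₀ i (by omega))
  exact ⟨u, hu.continuousOn, fun t _ => hEu t⟩

/-- tracking controllability for scalar controls: if (A,b) satisfies the
Kalman rank condition, there is an index k* ∈ {1,…,n} such that every target f of class
C^{n-k*+1} with vanishing derivatives up to order n-k* at 0 can be tracked, i.e.
⟨E, x(t)⟩ = f(t) on [0,T], with a continuous scalar control. -/
theorem scalar_tracking_controllability
    (T : ℝ) (hT : 0 < T) (n : ℕ) (hn : 1 ≤ n)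
    (A : Matrix (Fin n) (Fin n) ℝ) (b : Fin n → ℝ)
    (hKalman : (Matrix.of fun (i j : Fin n) => ((A ^ (j : ℕ)) *ᵥ b) i).rank = n)
    (E : Fin n → ℝ) (hE : E ≠ 0) :
    ∃ kstar : ℕ, 1 ≤ kstar ∧ kstar ≤ n ∧
      ∀ f : ℝ → ℝ, ContDiff ℝ (n - kstar + 1) f →
        (∀ i : ℕ, i ≤ n - kstar → iteratedDeriv i f 0 = 0) →
        ∃ u : ℝ → ℝ, ContinuousOn u (Set.Icc 0 T) ∧
          ∀ t ∈ Set.Icc (0:ℝ) T,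
            E ⬝ᵥ (∫ s in (0:ℝ)..t, NormedSpace.exp ((t - s) • A) *ᵥ (u s • b)) = f t :=
  scalar_tracking_controllability_general T n A b hKalman E hE
end

section
/- Let n ≥ 1, A ∈ ℝ^{n×n} and b ∈ ℝ^n satisfy the Kalman rank condition rank[b, Ab, …, A^{n−1}b] = n. Let α₁,…,αₙ ∈ ℝ be the coefficients of the characteristic polynomial of A, i.e. det(λI − A) = λⁿ + α₁λ^{n−1} + ⋯ + α_{n−1}λ + αₙ, and let Ã ∈ ℝ^{n×n} be the companion matrix with entries Ã_{i,i+1} = 1 for 1 ≤ i ≤ n−1, last row (−αₙ, −α_{n−1}, …, −α₁), and all other entries zero. Then there exists an invertible matrix P ∈ ℝ^{n×n} such that A = P Ã P^{−1} and b = P eₙ, where eₙ = (0,…,0,1)ᵀ ∈ ℝ^n is the last standard basis vector. -/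
open Matrix Polynomial

lemma isUnit_det_of_rank_eq_card (n : ℕ) (M : Matrix (Fin n) (Fin n) ℝ)
    (h : M.rank = n) : IsUnit M.det := by
  have hsurj : Function.Surjective M.mulVecLin := by
    rw [← LinearMap.range_eq_top]
    apply Submodule.eq_top_of_finrank_eq
    rw [← Matrix.rank, h]
    simp
  choose v hv using hsurj
  have hMB : M * (Matrix.of fun k j => v (Pi.single j 1) k) = 1 := by
    ext i j
    have h2 := congrFun (hv (Pi.single j 1)) i
    simp only [Matrix.mulVecLin_apply, Matrix.mulVec, dotProduct] at h2
    simp only [Matrix.mul_apply, Matrix.of_apply, Matrix.one_apply, h2,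
      Pi.single_apply]
  exact Matrix.isUnit_det_of_right_inverse hMB

/-- Brunovský canonical form: a single-input controllable pair (A,b) is
similar to the companion form (Ã, eₙ) built from the coefficients of the characteristic
polynomial of A. -/
theorem brunovsky_canonical_form
    (n : ℕ) (hn : 1 ≤ n)
    (A : Matrix (Fin n) (Fin n) ℝ) (b : Fin n → ℝ)
    (hKalman : (Matrix.of fun (i j : Fin n) => ((A ^ (j : ℕ)) *ᵥ b) i).rank = n)
    (α : ℕ → ℝ)
    (hchar : A.charpoly = X ^ n + ∑ j ∈ Finset.Icc 1 n, C (α j) * X ^ (n - j))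
    (Atilde : Matrix (Fin n) (Fin n) ℝ)
    (hAtilde : ∀ i j : Fin n, Atilde i j =
      if (i : ℕ) = n - 1 then -α (n - (j : ℕ))
      else if (j : ℕ) = (i : ℕ) + 1 then 1 else 0) :
    ∃ P : Matrix (Fin n) (Fin n) ℝ, IsUnit P.det ∧
      A = P * Atilde * P⁻¹ ∧
      b = P *ᵥ (fun i : Fin n => if (i : ℕ) = n - 1 then (1:ℝ) else 0) := by
  have hn1 : n - 1 < n := by omega
  set last : Fin n := ⟨n - 1, hn1⟩ with hlast
  set K : Matrix (Fin n) (Fin n) ℝ :=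
    Matrix.of fun (i j : Fin n) => ((A ^ (j : ℕ)) *ᵥ b) i with hKdef
  have hKunit : IsUnit K.det := isUnit_det_of_rank_eq_card n K hKalman
  set q : Fin n → ℝ := fun k => K⁻¹ last k with hqdef
  have hinvK : K⁻¹ * K = 1 := Matrix.nonsing_inv_mul K hKunit
  -- key orthogonality property of q
  have hq : ∀ m : ℕ, m < n → q ⬝ᵥ ((A ^ m) *ᵥ b) = if m = n - 1 then 1 else 0 := by
    intro m hm
    have h2 := congrFun (congrFun hinvK last) ⟨m, hm⟩
    simp only [Matrix.mul_apply, Matrix.one_apply, hKdef, Matrix.of_apply] at h2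
    have : q ⬝ᵥ ((A ^ m) *ᵥ b) = ∑ k, K⁻¹ last k * ((A ^ m) *ᵥ b) k := rfl
    rw [this]
    rw [h2]
    by_cases h : m = n - 1 <;> simp [Fin.ext_iff, hlast, h]
    · omega
  set Q : Matrix (Fin n) (Fin n) ℝ :=
    Matrix.of fun (i j : Fin n) => (q ᵥ* (A ^ (i : ℕ))) j with hQdef
  -- Q * K is anti-triangular
  have hQK : ∀ i j : Fin n, (Q * K) i j = q ⬝ᵥ ((A ^ ((i : ℕ) + (j : ℕ))) *ᵥ b) := by
    intro i j
    have : (Q * K) i j = (q ᵥ* (A ^ (i : ℕ))) ⬝ᵥ ((A ^ (j : ℕ)) *ᵥ b) := rfl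
    rw [this, ← Matrix.dotProduct_mulVec, Matrix.mulVec_mulVec, ← pow_add]
  -- det (Q * K) is a unit
  have hQKdet : IsUnit (Q * K).det := by
    have htri : ((Q * K).submatrix Fin.revPerm id).BlockTriangular id := by
      intro i j hij
      simp only [Matrix.submatrix_apply, id_eq, Fin.revPerm_apply] at *
      rw [hQK]
      have hlt : ((i.rev : ℕ) + (j : ℕ)) < n - 1 := by
        have := Fin.val_rev i
        omega
      rw [hq _ (by omega)]
      simp only [Nat.ne_of_lt hlt, if_false]
    have hdet1 : ((Q * K).submatrix Fin.revPerm id).det = 1 := by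
      rw [Matrix.det_of_upperTriangular htri]
      apply Finset.prod_eq_one
      intro i _
      simp only [Matrix.submatrix_apply, id_eq, Fin.revPerm_apply]
      rw [hQK]
      have heq : ((i.rev : ℕ) + (i : ℕ)) = n - 1 := by
        have := Fin.val_rev i
        omega
      rw [heq, hq _ (by omega)]
      simp
    have hperm := Matrix.det_permute (Fin.revPerm : Equiv.Perm (Fin n)) (Q * K)
    rw [hdet1] at hperm
    apply isUnit_iff_ne_zero.mpr
    intro h0
    rw [h0, mul_zero] at hperm
    exact one_ne_zero hperm
  have hQunit : IsUnit Q.det := by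
    rw [Matrix.det_mul] at hQKdet
    exact isUnit_of_mul_isUnit_left hQKdet
  -- the commutation relation
  have hcomm : Atilde * Q = Q * A := by
    ext i j
    have hRHS : (Q * A) i j = (q ᵥ* (A ^ ((i : ℕ) + 1))) j := by
      have : (Q * A) i j = ((q ᵥ* (A ^ (i : ℕ))) ᵥ* A) j := rfl
      rw [this, Matrix.vecMul_vecMul, ← pow_succ]
    rw [Matrix.mul_apply, hRHS]
    by_cases hi : (i : ℕ) = n - 1
    · -- last row: use Cayley–Hamilton
      have hin : (i : ℕ) + 1 = n := by omega
      have hCH : A ^ n = -∑ jj ∈ Finset.Icc 1 n, (α jj) • A ^ (n - jj) := by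
        have h0 := A.aeval_self_charpoly
        rw [hchar] at h0
        simp only [map_add, map_sum, _root_.map_mul, map_pow, aeval_X, aeval_C,
          Algebra.algebraMap_eq_smul_one, smul_mul_assoc, one_mul] at h0
        exact eq_neg_of_add_eq_zero_left h0
      have key : (q ᵥ* (A ^ n)) j = -∑ jj ∈ Finset.Icc 1 n, α jj * (q ᵥ* (A ^ (n - jj))) j := by
        have h1 : ∀ (M : Matrix (Fin n) (Fin n) ℝ), (q ᵥ* M) j = ∑ k, q k * M k j := fun _ => rfl
        rw [h1, hCH]
        have h2 : ∀ k : Fin n,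
            q k * (-∑ jj ∈ Finset.Icc 1 n, (α jj) • A ^ (n - jj)) k j
            = -∑ jj ∈ Finset.Icc 1 n, α jj * (q k * (A ^ (n - jj)) k j) := by
          intro k
          simp only [Matrix.neg_apply, Matrix.sum_apply, Matrix.smul_apply, smul_eq_mul,
            mul_neg, Finset.mul_sum]
          congr 1
          apply Finset.sum_congr rfl
          intro jj _
          ring
        rw [Finset.sum_congr rfl fun k _ => h2 k, Finset.sum_neg_distrib, Finset.sum_comm]
        congr 1
        apply Finset.sum_congr rfl
        intro jj _
        rw [h1, Finset.mul_sum]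
      have hre : ∑ m ∈ Finset.range n, α (n - m) * (q ᵥ* A ^ m) j
          = ∑ jj ∈ Finset.Icc 1 n, α jj * (q ᵥ* A ^ (n - jj)) j := by
        apply Finset.sum_nbij' (fun m => n - m) (fun m => n - m)
        · intro a ha; simp only [Finset.mem_range] at ha; simp only [Finset.mem_Icc]; omega
        · intro a ha; simp only [Finset.mem_Icc] at ha; simp only [Finset.mem_range]; omega
        · intro a ha; simp only [Finset.mem_range] at ha; omega
        · intro a ha; simp only [Finset.mem_Icc] at ha; omega
        · intro a ha; simp only [Finset.mem_range] at ha
          rw [Nat.sub_sub_self (by omega : a ≤ n)]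
      have h3 : ∀ k : Fin n, Atilde i k * Q k j
          = -(α (n - (k : ℕ)) * (q ᵥ* A ^ (k : ℕ)) j) := by
        intro k
        rw [hAtilde, if_pos hi]
        have : Q k j = (q ᵥ* A ^ (k : ℕ)) j := rfl
        rw [this]
        ring
      rw [Finset.sum_congr rfl fun k _ => h3 k, Finset.sum_neg_distrib,
        Fin.sum_univ_eq_sum_range (fun m => α (n - m) * (q ᵥ* A ^ m) j) n, hre, ← key, hin]
    · -- non-last row: shift
      have hi1 : (i : ℕ) + 1 < n := by omega
      set i' : Fin n := ⟨(i : ℕ) + 1, hi1⟩ with hi'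
      have : ∀ k : Fin n, Atilde i k * Q k j = if k = i' then Q k j else 0 := by
        intro k
        rw [hAtilde]
        simp only [hi, if_false]
        by_cases hk : k = i'
        · simp [hk, hi']
        · have : ¬ ((k : ℕ) = (i : ℕ) + 1) := by
            intro h; exact hk (Fin.ext h)
          simp [this, hk]
      rw [Finset.sum_congr rfl fun k _ => this k, Finset.sum_ite_eq' Finset.univ i']
      simp [hQdef, hi']
  -- assemble
  refine ⟨Q⁻¹, Matrix.isUnit_nonsing_inv_det Q hQunit, ?_, ?_⟩
  · rw [Matrix.nonsing_inv_nonsing_inv Q hQunit, mul_assoc, hcomm, ← mul_assoc,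
      Matrix.nonsing_inv_mul Q hQunit, one_mul]
  · have hQb : Q *ᵥ b = fun i : Fin n => if (i : ℕ) = n - 1 then (1 : ℝ) else 0 := by
      funext i
      have : (Q *ᵥ b) i = (q ᵥ* (A ^ (i : ℕ))) ⬝ᵥ b := rfl
      rw [this, ← Matrix.dotProduct_mulVec, hq _ i.isLt]
    rw [← hQb, Matrix.mulVec_mulVec, Matrix.nonsing_inv_mul Q hQunit, Matrix.one_mulVec]
end

section
/- Let n ≥ 1, α₁,…,αₙ ∈ ℝ, and let Ã ∈ ℝ^{n×n} be the companion matrix with entries Ã_{i,i+1} = 1 for 1 ≤ i ≤ n−1, last row (−αₙ, −α_{n−1}, …, −α₁), and all other entries zero. Let P ∈ ℝ^{n×n} be any invertible matrix and set A = P Ã P^{−1} and b = P eₙ, where eₙ = (0,…,0,1)ᵀ ∈ ℝ^n. Then the pair (A,b) satisfies the Kalman rank condition: rank[b, Ab, …, A^{n−1}b] = n. -/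
open Matrix

/-- converse part of Brunovský's theorem: any pair similar to the
companion form (Ã, eₙ) satisfies the Kalman rank condition. -/
theorem kalman_of_companion_similar
    (n : ℕ) (hn : 1 ≤ n) (α : ℕ → ℝ)
    (Atilde : Matrix (Fin n) (Fin n) ℝ)
    (hAtilde : ∀ i j : Fin n, Atilde i j =
      if (i : ℕ) = n - 1 then -α (n - (j : ℕ))
      else if (j : ℕ) = (i : ℕ) + 1 then 1 else 0)
    (P : Matrix (Fin n) (Fin n) ℝ) (hP : IsUnit P.det)
    (A : Matrix (Fin n) (Fin n) ℝ) (b : Fin n → ℝ)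
    (hA : A = P * Atilde * P⁻¹)
    (hb : b = P *ᵥ (fun i : Fin n => if (i : ℕ) = n - 1 then (1:ℝ) else 0)) :
    (Matrix.of fun (i j : Fin n) => ((A ^ (j : ℕ)) *ᵥ b) i).rank = n := by
  set e : Fin n → ℝ := fun i : Fin n => if (i : ℕ) = n - 1 then (1:ℝ) else 0 with he
  -- the vectors Ã^j eₙ
  set v : ℕ → Fin n → ℝ := fun j => (Atilde ^ j) *ᵥ e with hv
  -- key structural lemma
  have key : ∀ j : ℕ, j ≤ n - 1 → ∀ i : Fin n,
      ((i : ℕ) < n - 1 - j → v j i = 0) ∧ ((i : ℕ) = n - 1 - j → v j i = 1) := by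
    intro j
    induction j with
    | zero =>
      intro _ i
      constructor
      · intro hi
        simp only [hv, pow_zero, one_mulVec, he]
        simp only [Nat.sub_zero] at hi
        simp [Nat.ne_of_lt hi]
      · intro hi
        simp only [hv, pow_zero, one_mulVec, he]
        simp [hi]
    | succ j ih =>
      intro hj i
      have hj' : j ≤ n - 1 := Nat.le_of_succ_le hj
      have ihj := ih hj'
      have hvj : v (j+1) = Atilde *ᵥ v j := by
        simp only [hv]
        rw [pow_succ', ← mulVec_mulVec]
      -- for rows i with i < n-1, (Ã w) i = w (i+1)
      have row : ∀ (i : Fin n) (hi : (i : ℕ) < n - 1) (w : Fin n → ℝ),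
          (Atilde *ᵥ w) i = w ⟨(i : ℕ) + 1, by omega⟩ := by
        intro i hi w
        have : (Atilde *ᵥ w) i = ∑ k : Fin n, Atilde i k * w k := rfl
        rw [this]
        rw [Finset.sum_eq_single (⟨(i : ℕ) + 1, by omega⟩ : Fin n)]
        · rw [hAtilde]
          simp [Nat.ne_of_lt hi]
        · intro k _ hk
          rw [hAtilde]
          have : ¬ (k : ℕ) = (i : ℕ) + 1 := by
            intro h
            apply hk
            exact Fin.ext h
          simp [Nat.ne_of_lt hi, this]
        · intro h
          exact absurd (Finset.mem_univ _) h
      constructor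
      · intro hi
        have hi' : (i : ℕ) < n - 1 := by omega
        rw [hvj, row i hi']
        exact (ihj ⟨(i : ℕ) + 1, by omega⟩).1 (by simp only [Fin.val_mk]; omega)
      · intro hi
        have hi' : (i : ℕ) < n - 1 := by omega
        rw [hvj, row i hi']
        exact (ihj ⟨(i : ℕ) + 1, by omega⟩).2 (by simp only [Fin.val_mk]; omega)
  -- the companion Kalman matrix
  set Kt : Matrix (Fin n) (Fin n) ℝ := Matrix.of fun (i j : Fin n) => v (j : ℕ) i with hKt
  -- its column-reversed version is lower triangular with 1's on the diagonal
  have hKtdet : IsUnit Kt.det := by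
    have hsub : (Kt.submatrix id Fin.revPerm).det = Equiv.Perm.sign (Fin.revPerm (n := n)) * Kt.det :=
      Matrix.det_permute' _ _
    have htri : (Kt.submatrix id Fin.revPerm).BlockTriangular OrderDual.toDual := by
      intro i j hij
      have hij' : (i : ℕ) < (j : ℕ) := OrderDual.toDual_lt_toDual.mp hij
      simp only [Matrix.submatrix_apply, id_eq, hKt, Matrix.of_apply]
      have hrev : ((Fin.revPerm j : Fin n) : ℕ) = n - 1 - (j : ℕ) := by
        rw [show (Fin.revPerm j : Fin n) = Fin.rev j from rfl, Fin.val_rev]; omega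
      rw [hrev]
      have hjle : n - 1 - (j : ℕ) ≤ n - 1 := by omega
      exact (key _ hjle i).1 (by omega)
    have hdiag : (Kt.submatrix id Fin.revPerm).det = 1 := by
      rw [Matrix.det_of_lowerTriangular _ htri]
      apply Finset.prod_eq_one
      intro i _
      simp only [Matrix.submatrix_apply, id_eq, hKt, Matrix.of_apply]
      have hrev : ((Fin.revPerm i : Fin n) : ℕ) = n - 1 - (i : ℕ) := by
        rw [show (Fin.revPerm i : Fin n) = Fin.rev i from rfl, Fin.val_rev]; omega
      rw [hrev]
      exact (key _ (by omega) i).2 (by omega)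
    have : IsUnit (Kt.submatrix id Fin.revPerm).det := by rw [hdiag]; exact isUnit_one
    rw [hsub] at this
    exact (IsUnit.mul_iff.mp this).2
  -- A^j b = P (Ã^j e)
  have hpow : ∀ j : ℕ, (A ^ j) *ᵥ b = P *ᵥ v j := by
    intro j
    have hAj : A ^ j = P * Atilde ^ j * P⁻¹ := by
      induction j with
      | zero => simp [Matrix.mul_nonsing_inv P hP]
      | succ j ih =>
        rw [pow_succ, ih, hA, pow_succ]
        have : P⁻¹ * (P * Atilde * P⁻¹) = Atilde * P⁻¹ := by
          rw [← Matrix.mul_assoc, ← Matrix.mul_assoc, Matrix.nonsing_inv_mul P hP, Matrix.one_mul]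
        rw [Matrix.mul_assoc (P * Atilde ^ j) P⁻¹ (P * Atilde * P⁻¹), this,
          ← Matrix.mul_assoc, Matrix.mul_assoc P (Atilde ^ j) Atilde]
    simp only [hv]
    rw [hAj, hb, mulVec_mulVec, Matrix.mul_assoc (P * Atilde ^ j) P⁻¹ P,
      Matrix.nonsing_inv_mul P hP, Matrix.mul_one, ← mulVec_mulVec]
  -- the Kalman matrix equals P * Kt
  have hK : (Matrix.of fun (i j : Fin n) => ((A ^ (j : ℕ)) *ᵥ b) i) = P * Kt := by
    ext i j
    rw [Matrix.of_apply, hpow]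
    rfl
  rw [hK]
  have : IsUnit (P * Kt) := by
    rw [Matrix.isUnit_iff_isUnit_det, Matrix.det_mul]
    exact hP.mul hKtdet
  rw [Matrix.rank_of_isUnit _ this, Fintype.card_fin]
end
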